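/- Suppose R = C(M) + E where C(M) = M·λ_k(β)_a⃗ with M ∈ F^(s×k) and E ∈ F^(s×n) has sum-rank weight t, and put t_i := rk_q(E^(i)). Let (Q_0, Q_1, …, Q_s) be coefficient sequences satisfying the interpolation conditions for R, let f^(l) ∈ F^k denote the l-th row of M (a coefficient vector of degree < k), and define P := Q_0 + Σ_(l=1)^s Q_l ∗ f^(l). Then for every i = 1, …, ℓ there exist GF(q)-linearly independent elements ζ^(i)_1, …, ζ^(i)_(n_i−t_i) ∈ F such that P(ζ^(i)_j)_(a_i) = 0 for all i = 1, …, ℓ and all j = 1, …, n_i − t_i. -/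

import Mathlib

/-!
Since `σ` fixes `K`, generalized operator evaluation `b ↦ g(b)_a` is `K`-linear, and it turns
the skew product into composition: `(g ∗ h)(b)_a = g(h(b)_a)_a`. Fix a block `i` and a
`K`-linear relation `c` among the columns of `E^(i)`, and put `ζ := Σ_μ c_μ β^(i)_μ`. Then
`f^(l)(ζ)_{a_i} = Σ_μ c_μ (R_{l,μ} - E_{l,μ}) = Σ_μ c_μ R_{l,μ}`, so `P(ζ)_{a_i}` is the
`c`-combination of the interpolation conditions, hence zero. The relations form a space of
dimension `n_i - t_i`, and the independence of `β^(i)` carries a basis of it to independent `ζ`s.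
-/

namespace Stmt12

/-- `genNorm σ a i = σ^(i-1)(a) ⋯ σ(a) · a`, the generalized power function `N_i(a)`. -/
def genNorm {F : Type} [Field F] (σ : F ≃+* F) (a : F) : ℕ → F
  | 0 => 1
  | i + 1 => (⇑σ)^[i] a * genNorm σ a i

/-- Generalized operator `D_a^i(b) = σ^i(b) · N_i(a)` for `i ∈ ℕ`. -/
def opev {F : Type} [Field F] (σ : F ≃+* F) (a b : F) (i : ℕ) : F :=
  (⇑σ)^[i] b * genNorm σ a i

/-- `b` is σ-conjugate to `a`, i.e. `b = σ(c)·a·c⁻¹` for some nonzero `c`. -/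
def SConj {F : Type} [Field F] (σ : F ≃+* F) (a b : F) : Prop :=
  ∃ c : F, c ≠ 0 ∧ b = σ c * a * c⁻¹

/-- σ-generalized Moore matrix `λ_d(x)_a⃗` w.r.t. the length partition `nn`:
its row `r` applies `D_{a_i}^r` entrywise to the `i`-th block of `x`. -/
def moore {F : Type} [Field F] (σ : F ≃+* F) {ℓ : ℕ} (nn : Fin ℓ → ℕ) (aa : Fin ℓ → F)
    (d : ℕ) (x : (Σ i : Fin ℓ, Fin (nn i)) → F) :
    Matrix (Fin d) (Σ i : Fin ℓ, Fin (nn i)) F :=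
  Matrix.of fun r p => opev σ (aa p.1) (x p) (r : ℕ)

/-- `λ_d(X)_a⃗` for a matrix `X`: the stack of `λ_d(x_j)_a⃗` over the rows of `X`. -/
def mooreMat {F : Type} [Field F] (σ : F ≃+* F) {ℓ : ℕ} (nn : Fin ℓ → ℕ) (aa : Fin ℓ → F)
    {s : ℕ} (d : ℕ) (X : Matrix (Fin s) (Σ i : Fin ℓ, Fin (nn i)) F) :
    Matrix (Fin s × Fin d) (Σ i : Fin ℓ, Fin (nn i)) F :=
  Matrix.of fun r p => opev σ (aa p.1) (X r.1 p) (r.2 : ℕ)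

/-- `rk_q` of a vector: the `K`-dimension of the `K`-span of its entries. -/
noncomputable def rkq (K : Type) [Field K] {F : Type} [Field F] [Algebra K F] {ι : Type}
    (v : ι → F) : ℕ :=
  Module.finrank K (Submodule.span K (Set.range v))

/-- `rk_q` of a matrix: the `K`-dimension of the `K`-span of its columns. -/
noncomputable def rkqMat (K : Type) [Field K] {F : Type} [Field F] [Algebra K F]
    {s : ℕ} {ι : Type} (X : Matrix (Fin s) ι F) : ℕ :=
  Module.finrank K (Submodule.span K (Set.range fun j : ι => fun r : Fin s => X r j))

/-- Sum-rank weight of a blockwise vector. -/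
noncomputable def wtV (K : Type) [Field K] {F : Type} [Field F] [Algebra K F] {ℓ : ℕ}
    (nn : Fin ℓ → ℕ) (x : (Σ i : Fin ℓ, Fin (nn i)) → F) : ℕ :=
  ∑ i, rkq K fun μ : Fin (nn i) => x ⟨i, μ⟩

/-- Sum-rank weight of a blockwise matrix. -/
noncomputable def wtM (K : Type) [Field K] {F : Type} [Field F] [Algebra K F] {s ℓ : ℕ}
    (nn : Fin ℓ → ℕ) (X : Matrix (Fin s) (Σ i : Fin ℓ, Fin (nn i)) F) : ℕ :=
  ∑ i, rkqMat K (Matrix.of fun (r : Fin s) (μ : Fin (nn i)) => X r ⟨i, μ⟩)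

/-- Codeword `C(M) = M · λ_k(β)_a⃗` of the `s`-interleaved linearized Reed–Solomon code. -/
def codeword {F : Type} [Field F] (σ : F ≃+* F) {ℓ : ℕ} (nn : Fin ℓ → ℕ) (aa : Fin ℓ → F)
    (β : (Σ i : Fin ℓ, Fin (nn i)) → F) {s : ℕ} (k : ℕ) (M : Matrix (Fin s) (Fin k) F) :
    Matrix (Fin s) (Σ i : Fin ℓ, Fin (nn i)) F :=
  M * moore σ nn aa k β

/-- A coefficient vector as a finitely supported coefficient sequence. -/
noncomputable def ofVec {F : Type} [Field F] {d : ℕ} (v : Fin d → F) : ℕ →₀ F :=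
  ∑ u : Fin d, Finsupp.single (u : ℕ) (v u)

/-- Generalized operator evaluation `g(b)_a = Σ_u g_u · σ^u(b) · N_u(a)` of a skew
polynomial (finitely supported coefficient sequence). -/
noncomputable def evalOp {F : Type} [Field F] (σ : F ≃+* F) (g : ℕ →₀ F) (a b : F) : F :=
  g.sum fun u c => c * opev σ a b u

/-- Skew product of coefficient sequences: `(g ∗ h)_w = Σ_{u+v=w} g_u · σ^u(h_v)`. -/
noncomputable def skewMulF {F : Type} [Field F] (σ : F ≃+* F) (g h : ℕ →₀ F) : ℕ →₀ F :=
  g.sum fun u cu => h.sum fun v cv => Finsupp.single (u + v) (cu * (⇑σ)^[u] cv)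

section OperatorEvaluation

variable {F : Type} [Field F] (σ : F ≃+* F)

lemma genNorm_add (a : F) (u v : ℕ) :
    genNorm σ a (u + v) = (⇑σ)^[u] (genNorm σ a v) * genNorm σ a u := by
  induction v with
  | zero => simp [genNorm]
  | succ v ih =>
    rw [← add_assoc, genNorm, ih, genNorm, iterate_map_mul, Function.iterate_add_apply]
    ring

lemma opev_add (a b : F) (u v : ℕ) :
    opev σ a b (u + v) = (⇑σ)^[u] (opev σ a b v) * genNorm σ a u := by
  rw [opev, opev, genNorm_add, iterate_map_mul, Function.iterate_add_apply]
  ring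

lemma evalOp_eq_linearCombination (g : ℕ →₀ F) (a b : F) :
    evalOp σ g a b = Finsupp.linearCombination F (opev σ a b) g :=
  rfl

lemma evalOp_single (u : ℕ) (c a b : F) :
    evalOp σ (Finsupp.single u c) a b = c * opev σ a b u := by
  simp [evalOp_eq_linearCombination]

lemma evalOp_add (g h : ℕ →₀ F) (a b : F) :
    evalOp σ (g + h) a b = evalOp σ g a b + evalOp σ h a b := by
  simp [evalOp_eq_linearCombination]

lemma evalOp_sum {ι : Type*} (s : Finset ι) (g : ι → ℕ →₀ F) (a b : F) :
    evalOp σ (∑ l ∈ s, g l) a b = ∑ l ∈ s, evalOp σ (g l) a b := by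
  simp [evalOp_eq_linearCombination]

lemma evalOp_ofVec {d : ℕ} (v : Fin d → F) (a b : F) :
    evalOp σ (ofVec v) a b = ∑ u : Fin d, v u * opev σ a b u := by
  simp only [ofVec, evalOp_sum, evalOp_single]

lemma evalOp_skewMulF (g h : ℕ →₀ F) (a b : F) :
    evalOp σ (skewMulF σ g h) a b = evalOp σ g a (evalOp σ h a b) := by
  rw [skewMulF, Finsupp.sum, evalOp_sum, evalOp, Finsupp.sum]
  refine Finset.sum_congr rfl fun u _ => ?_
  rw [Finsupp.sum, evalOp_sum, evalOp, Finsupp.sum, opev, ← RingAut.coe_pow, map_sum,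
    Finset.sum_mul, Finset.mul_sum]
  refine Finset.sum_congr rfl fun v _ => ?_
  rw [evalOp_single, opev_add, RingAut.coe_pow, iterate_map_mul]
  ring

variable {K : Type} [Field K] [Algebra K F]
  (hσ : ∀ c : K, σ (algebraMap K F c) = algebraMap K F c)
include hσ

lemma opev_smul (c : K) (a b : F) (u : ℕ) : opev σ a (c • b) u = c • opev σ a b u := by
  rw [opev, opev, Algebra.smul_def, Algebra.smul_def, iterate_map_mul,
    Function.iterate_fixed (hσ c), mul_assoc]

noncomputable def evalOpLinearMap (g : ℕ →₀ F) (a : F) : F →ₗ[K] F where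
  toFun := evalOp σ g a
  map_add' x y := by
    simp only [evalOp, opev, iterate_map_add, add_mul, mul_add, Finsupp.sum_add]
  map_smul' c x := by
    simp only [evalOp, opev_smul σ hσ, mul_smul_comm, Finsupp.sum, Finset.smul_sum,
      RingHom.id_apply]

lemma evalOp_sum_smul (g : ℕ →₀ F) (a : F) {ι : Type*} (s : Finset ι) (c : ι → K)
    (x : ι → F) : evalOp σ g a (∑ μ ∈ s, c μ • x μ) = ∑ μ ∈ s, c μ • evalOp σ g a (x μ) := by
  change evalOpLinearMap σ hσ g a _ = ∑ μ ∈ s, c μ • evalOpLinearMap σ hσ g a (x μ)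
  simp only [map_sum, map_smul]

end OperatorEvaluation

lemma codeword_apply {F : Type} [Field F] (σ : F ≃+* F) {ℓ : ℕ} (nn : Fin ℓ → ℕ)
    (aa : Fin ℓ → F) (β : (Σ i : Fin ℓ, Fin (nn i)) → F) {s k : ℕ}
    (M : Matrix (Fin s) (Fin k) F) (l : Fin s) (p : Σ i : Fin ℓ, Fin (nn i)) :
    codeword σ nn aa β k M l p = evalOp σ (ofVec (M l)) (aa p.1) (β p) := by
  rw [evalOp_ofVec]
  rfl

theorem evalOp_eq_zero_of_interpolation {F K : Type} [Field F] [Field K] [Algebra K F]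
    (σ : F ≃+* F) (hσ : ∀ c : K, σ (algebraMap K F c) = algebraMap K F c)
    {ι : Type*} [Fintype ι] {s : ℕ} (a : F) (β : ι → F) (Q₀ : ℕ →₀ F) (Q f : Fin s → ℕ →₀ F)
    (E R : Matrix (Fin s) ι F) (hR : ∀ l μ, R l μ = evalOp σ (f l) a (β μ) + E l μ)
    (hint : ∀ μ, evalOp σ Q₀ a (β μ) + ∑ l, evalOp σ (Q l) a (R l μ) = 0)
    (c : ι → K) (hc : ∑ μ, c μ • E.transpose μ = 0) :
    evalOp σ (Q₀ + ∑ l, skewMulF σ (Q l) (f l)) a (∑ μ, c μ • β μ) = 0 := by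
  have hf : ∀ l, evalOp σ (f l) a (∑ μ, c μ • β μ) = ∑ μ, c μ • R l μ := by
    intro l
    have hcl : ∑ μ, c μ • E l μ = 0 := by simpa using congrFun hc l
    simp only [evalOp_sum_smul σ hσ, hR, smul_add, Finset.sum_add_distrib, hcl, add_zero]
  calc evalOp σ (Q₀ + ∑ l, skewMulF σ (Q l) (f l)) a (∑ μ, c μ • β μ)
      = ∑ μ, c μ • (evalOp σ Q₀ a (β μ) + ∑ l, evalOp σ (Q l) a (R l μ)) := by
        simp only [evalOp_add, evalOp_sum, evalOp_skewMulF, hf]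
        simp only [evalOp_sum_smul σ hσ, smul_add, Finset.smul_sum, Finset.sum_add_distrib]
        rw [Finset.sum_comm]
    _ = 0 := by simp only [hint, smul_zero, Finset.sum_const_zero]

theorem exists_linearIndependent_relations {K V : Type*} [Field K] [AddCommGroup V]
    [Module K V] {m : ℕ} (v : Fin m → V) :
    ∃ c : Fin (m - Module.finrank K (Submodule.span K (Set.range v))) → Fin m → K,
      LinearIndependent K c ∧ ∀ j, ∑ μ, c j μ • v μ = 0 := by
  set φ := Fintype.linearCombination K v
  have hdim : Module.finrank K (LinearMap.ker φ) =
      m - Module.finrank K (Submodule.span K (Set.range v)) := by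
    have := φ.finrank_range_add_finrank_ker
    rw [Fintype.range_linearCombination, Module.finrank_fin_fun] at this
    omega
  let b := Module.finBasisOfFinrankEq K _ hdim
  have hb := b.linearIndependent.map' (LinearMap.ker φ).subtype (Submodule.ker_subtype _)
  refine ⟨_, hb, fun j => ?_⟩
  rw [← Fintype.linearCombination_apply]
  exact (b j).2

theorem roots_of_P_general
    {K F : Type} [Field K] [Field F] [Algebra K F]
    (σ : F ≃+* F)
    (hfix : ∀ x : F, σ x = x ↔ x ∈ Set.range (algebraMap K F))
    {ℓ : ℕ} (nn : Fin ℓ → ℕ) (aa : Fin ℓ → F)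
    (β : (Σ i : Fin ℓ, Fin (nn i)) → F)
    (hβ : ∀ i, LinearIndependent K fun μ : Fin (nn i) => β ⟨i, μ⟩)
    {s : ℕ} {k : ℕ}
    (M : Matrix (Fin s) (Fin k) F)
    (E R : Matrix (Fin s) (Σ i : Fin ℓ, Fin (nn i)) F)
    (hR : R = codeword σ nn aa β k M + E)
    (Q0 : ℕ →₀ F) (Q : Fin s → (ℕ →₀ F))
    (hint : ∀ p : Σ i : Fin ℓ, Fin (nn i),
      evalOp σ Q0 (aa p.1) (β p) + ∑ l : Fin s, evalOp σ (Q l) (aa p.1) (R l p) = 0) :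
    ∀ i : Fin ℓ,
      ∃ ζ : Fin (nn i -
          rkqMat K (Matrix.of fun (r : Fin s) (μ : Fin (nn i)) => E r ⟨i, μ⟩)) → F,
        LinearIndependent K ζ ∧
        ∀ j, evalOp σ (Q0 + ∑ l : Fin s, skewMulF σ (Q l) (ofVec (M l)))
          (aa i) (ζ j) = 0 := by
  intro i
  have hσ : ∀ c : K, σ (algebraMap K F c) = algebraMap K F c := fun c => (hfix _).2 ⟨c, rfl⟩
  obtain ⟨c, hc_indep, hc_rel⟩ :=
    exists_linearIndependent_relations (K := K) fun μ (l : Fin s) => E l ⟨i, μ⟩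
  refine ⟨fun j => ∑ μ, c j μ • β ⟨i, μ⟩, ?_, fun j => ?_⟩
  · have hβinj := linearIndependent_iff_injective_fintypeLinearCombination.1 (hβ i)
    exact hc_indep.map' _ (LinearMap.ker_eq_bot.2 hβinj)
  · refine evalOp_eq_zero_of_interpolation σ hσ (aa i) _ Q0 Q (fun l => ofVec (M l))
      (Matrix.of fun l μ => E l ⟨i, μ⟩) (Matrix.of fun l μ => R l ⟨i, μ⟩) (fun l μ => ?_)
      (fun μ => hint ⟨i, μ⟩) (c j) (hc_rel j)
    simp [hR, codeword_apply]

/-- Roots of `P = Q_0 + Σ_l Q_l ∗ f^(l)`.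
If `R = C(M) + E` and `(Q_0, Q_1, …, Q_s)` satisfies the interpolation conditions for
`R`, then for every block `i` there are `GF(q)`-linearly independent elements
`ζ^(i)_1, …, ζ^(i)_{n_i − t_i}` on which `P` vanishes under generalized operator
evaluation w.r.t. `a_i`, where `t_i = rk_q(E^(i))` and `f^(l)` is the `l`-th row of `M`. -/
theorem roots_of_P
    {K F : Type} [Field K] [Field F] [Algebra K F] [Fintype K] [Fintype F]
    (σ : F ≃+* F)
    (hfix : ∀ x : F, σ x = x ↔ x ∈ Set.range (algebraMap K F))
    {ℓ : ℕ} (hℓ : 1 ≤ ℓ) (nn : Fin ℓ → ℕ) (aa : Fin ℓ → F)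
    (ha0 : ∀ i, aa i ≠ 0)
    (haconj : ∀ i j : Fin ℓ, i ≠ j → ¬ SConj σ (aa i) (aa j))
    (β : (Σ i : Fin ℓ, Fin (nn i)) → F)
    (hβ : ∀ i, LinearIndependent K fun μ : Fin (nn i) => β ⟨i, μ⟩)
    {s : ℕ} (hs : 1 ≤ s) {k n t : ℕ} (hn : n = ∑ i, nn i)
    (hk : 1 ≤ k) (hkn : k ≤ n)
    (M : Matrix (Fin s) (Fin k) F)
    (E R : Matrix (Fin s) (Σ i : Fin ℓ, Fin (nn i)) F)
    (hR : R = codeword σ nn aa β k M + E)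
    (ht : wtM K nn E = t)
    (Q0 : ℕ →₀ F) (Q : Fin s → (ℕ →₀ F))
    (hint : ∀ p : Σ i : Fin ℓ, Fin (nn i),
      evalOp σ Q0 (aa p.1) (β p) + ∑ l : Fin s, evalOp σ (Q l) (aa p.1) (R l p) = 0) :
    ∀ i : Fin ℓ,
      ∃ ζ : Fin (nn i -
          rkqMat K (Matrix.of fun (r : Fin s) (μ : Fin (nn i)) => E r ⟨i, μ⟩)) → F,
        LinearIndependent K ζ ∧
        ∀ j, evalOp σ (Q0 + ∑ l : Fin s, skewMulF σ (Q l) (ofVec (M l)))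
          (aa i) (ζ j) = 0 :=
  roots_of_P_general σ hfix nn aa β hβ M E R hR Q0 Q hint

end Stmt12
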